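/- Let a(x) = 1/(x+2)^2 and let U be Wirsing's operator as defined. Then (Ua)(x) ≤ (1/2) a(x) for all x ∈ [0,1]. -/

import Mathlib

open MeasureTheory Filter Set

/-- The Gauss map `x ↦ 1/x - ⌊1/x⌋` (sending `0` to `0`). -/
noncomputable def gaussMap (x : ℝ) : ℝ := Int.fract x⁻¹

/-- The Gauss measure `μ(B) = (1/log 2) ∫_B dx/(1+x)` on `[0,1)`. -/
noncomputable def gaussMeasure : Measure ℝ :=
  (volume.restrict (Set.Ico (0:ℝ) 1)).withDensity
    (fun x => ENNReal.ofReal (1 / ((1 + x) * Real.log 2)))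

/-- The `n`-th continued fraction digit `a_{n+1}` of `x`. -/
noncomputable def cfDigit (x : ℝ) (n : ℕ) : ℤ := ⌊(gaussMap^[n] x)⁻¹⌋

/-- The cylinder set of points of `[0,1)` whose continued fraction expansion starts with `s`. -/
noncomputable def cylinder (s : List ℕ+) : Set ℝ :=
  {x ∈ Set.Ico (0:ℝ) 1 | ∀ i (h : i < s.length), cfDigit x i = (s.get ⟨i, h⟩ : ℕ)}

/-- A point of `[0,1)` is CF-normal if every finite string of positive integers occurs among
its continued fraction digits with limiting frequency equal to the Gauss measure of the
corresponding cylinder set. -/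
noncomputable def CFNormal (x : ℝ) : Prop :=
  ∀ s : List ℕ+, s ≠ [] →
    Filter.Tendsto
      (fun n : ℕ => (Nat.card {i : ℕ | i ≤ n ∧ gaussMap^[i] x ∈ cylinder s} : ℝ) / n)
      Filter.atTop (nhds (gaussMeasure (cylinder s)).toReal)

/-- The Gauss–Kuzmin transfer operator. -/
noncomputable def transferOp (f : ℝ → ℝ) (x : ℝ) : ℝ :=
  ∑' k : ℕ, (1 + x) / (((k:ℝ) + 1 + x) * ((k:ℝ) + 2 + x)) * f (1 / ((k:ℝ) + 1 + x))

/-- Wirsing's operator. -/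
noncomputable def wirsingOp (g : ℝ → ℝ) (x : ℝ) : ℝ :=
  ∑' k : ℕ,
    (((k:ℝ) + 1) / (((k:ℝ) + 2 + x) ^ 2) *
        (∫ y in (1 / ((k:ℝ) + 2 + x))..(1 / ((k:ℝ) + 1 + x)), g y) +
      (1 + x) / (((k:ℝ) + 1 + x) ^ 3 * ((k:ℝ) + 2 + x)) * g (1 / ((k:ℝ) + 1 + x)))

/-!
Since `a(y) = 1/(y+2)^2` is decreasing, the integral in the `k`-th summand of `U a` is at most
the length `1/((k+1+x)(k+2+x))` of the interval times `a(1/(k+2+x))`. The resulting rational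
bound is dominated by `h(k) - h(k+1)`, where `h(0) = a(x)/2` and `h(k) = 1/(3(k+2+x)^2)` for
`k ≥ 1`; after clearing denominators each of these comparisons says that a polynomial in `k`
and `x` with nonnegative coefficients is nonnegative. The series then telescopes to at most
`h(0)`.
-/

noncomputable def wirsingTerm (g : ℝ → ℝ) (x : ℝ) (k : ℕ) : ℝ :=
  ((k:ℝ) + 1) / (((k:ℝ) + 2 + x) ^ 2) *
      (∫ y in (1 / ((k:ℝ) + 2 + x))..(1 / ((k:ℝ) + 1 + x)), g y) +
    (1 + x) / (((k:ℝ) + 1 + x) ^ 3 * ((k:ℝ) + 2 + x)) * g (1 / ((k:ℝ) + 1 + x))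

theorem wirsingOp_eq_tsum (g : ℝ → ℝ) (x : ℝ) : wirsingOp g x = ∑' k, wirsingTerm g x k := rfl

theorem tsum_le_of_le_sub_succ {f h : ℕ → ℝ} (hf : ∀ n, 0 ≤ f n)
    (hfh : ∀ n, f n ≤ h n - h (n + 1)) (hh : ∀ n, 0 ≤ h n) : ∑' n, f n ≤ h 0 :=
  Real.tsum_le_of_sum_range_le hf fun n => calc
    ∑ i ∈ Finset.range n, f i ≤ ∑ i ∈ Finset.range n, (h i - h (i + 1)) :=
      Finset.sum_le_sum fun i _ => hfh i
    _ = h 0 - h n := Finset.sum_range_sub' h n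
    _ ≤ h 0 := sub_le_self _ (hh n)

theorem AntitoneOn.intervalIntegral_le_mul {g : ℝ → ℝ} {a b : ℝ} (hab : a ≤ b)
    (hg : AntitoneOn g (Icc a b)) : ∫ y in a..b, g y ≤ (b - a) * g a := calc
  ∫ y in a..b, g y ≤ ∫ _ in a..b, g a :=
    intervalIntegral.integral_mono_on hab ((uIcc_of_le hab ▸ hg).intervalIntegrable)
      intervalIntegrable_const fun y hy => hg ⟨le_rfl, hab⟩ hy hy.1
  _ = (b - a) * g a := by simp

section WirsingTerm

variable {g : ℝ → ℝ} {x : ℝ}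

theorem wirsingTerm_nonneg (hg : 0 ≤ g) (hx : 0 ≤ x) (k : ℕ) : 0 ≤ wirsingTerm g x k := by
  have hle : 1 / ((k:ℝ) + 2 + x) ≤ 1 / ((k:ℝ) + 1 + x) := by gcongr; linarith
  have hint := intervalIntegral.integral_nonneg (μ := volume) hle fun y _ => hg y
  exact add_nonneg (mul_nonneg (by positivity) hint) (mul_nonneg (by positivity) (hg _))

theorem wirsingTerm_le_of_antitoneOn (hg : AntitoneOn g (Ioi 0)) (hx : 0 ≤ x) (k : ℕ) :
    wirsingTerm g x k ≤
      ((k:ℝ) + 1) / (((k:ℝ) + 2 + x) ^ 2) *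
          ((1 / ((k:ℝ) + 1 + x) - 1 / ((k:ℝ) + 2 + x)) * g (1 / ((k:ℝ) + 2 + x))) +
        (1 + x) / (((k:ℝ) + 1 + x) ^ 3 * ((k:ℝ) + 2 + x)) * g (1 / ((k:ℝ) + 1 + x)) := by
  have hpos : 0 < 1 / ((k:ℝ) + 2 + x) := by positivity
  have hle : 1 / ((k:ℝ) + 2 + x) ≤ 1 / ((k:ℝ) + 1 + x) := by gcongr; linarith
  have hint := (hg.mono fun y hy => hpos.trans_le hy.1).intervalIntegral_le_mul hle
  unfold wirsingTerm
  gcongr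

end WirsingTerm

theorem antitoneOn_one_div_add_two_sq : AntitoneOn (fun y : ℝ => 1 / (y + 2) ^ 2) (Ioi 0) :=
  fun a ha b _ hab => by
    have : (0:ℝ) < a + 2 := by linarith [mem_Ioi.mp ha]
    dsimp only
    gcongr

noncomputable def wirsingBound (x u : ℝ) : ℝ :=
  (u + 1) / ((u + 1 + x) * (u + 2 + x) * (2 * (u + 2 + x) + 1) ^ 2) +
    (1 + x) / ((u + 1 + x) * (u + 2 + x) * (2 * (u + 1 + x) + 1) ^ 2)

theorem wirsingTerm_le_wirsingBound {x : ℝ} (hx : 0 ≤ x) (k : ℕ) :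
    wirsingTerm (fun y => 1 / (y + 2) ^ 2) x k ≤ wirsingBound x k := by
  refine (wirsingTerm_le_of_antitoneOn antitoneOn_one_div_add_two_sq hx k).trans_eq ?_
  have : (0:ℝ) < k + 1 + x := by positivity
  unfold wirsingBound
  field_simp
  ring

theorem wirsingBound_zero_le {x : ℝ} (hx : 0 ≤ x) :
    wirsingBound x 0 ≤ 1 / (2 * (x + 2) ^ 2) - 1 / (3 * (x + 3) ^ 2) := by
  unfold wirsingBound
  rw [div_add_div _ _ (by positivity) (by positivity),
    div_sub_div _ _ (by positivity) (by positivity),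
    div_le_div_iff₀ (by positivity) (by positivity), ← sub_nonneg]
  ring_nf
  positivity

theorem wirsingBound_succ_le {x u : ℝ} (hx : 0 ≤ x) (hu : 0 ≤ u) :
    wirsingBound x (u + 1) ≤ 1 / (3 * (u + 3 + x) ^ 2) - 1 / (3 * (u + 4 + x) ^ 2) := by
  unfold wirsingBound
  rw [div_add_div _ _ (by positivity) (by positivity),
    div_sub_div _ _ (by positivity) (by positivity),
    div_le_div_iff₀ (by positivity) (by positivity), ← sub_nonneg]
  ring_nf
  positivity

noncomputable def wirsingMajorant (x : ℝ) (k : ℕ) : ℝ :=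
  if k = 0 then 1 / (2 * (x + 2) ^ 2) else 1 / (3 * ((k:ℝ) + 2 + x) ^ 2)

theorem wirsingMajorant_nonneg (x : ℝ) (k : ℕ) : 0 ≤ wirsingMajorant x k := by
  unfold wirsingMajorant
  split_ifs <;> positivity

theorem wirsingMajorant_succ (x : ℝ) (n : ℕ) :
    wirsingMajorant x (n + 1) = 1 / (3 * ((n:ℝ) + 3 + x) ^ 2) := by
  simp only [wirsingMajorant, Nat.succ_ne_zero, if_false]
  push_cast
  ring

theorem wirsingBound_le_wirsingMajorant_sub {x : ℝ} (hx : 0 ≤ x) (k : ℕ) :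
    wirsingBound x k ≤ wirsingMajorant x k - wirsingMajorant x (k + 1) := by
  rw [wirsingMajorant_succ]
  cases k with
  | zero =>
    simpa [wirsingMajorant, add_comm x] using wirsingBound_zero_le hx
  | succ n =>
    rw [wirsingMajorant_succ]
    convert wirsingBound_succ_le hx n.cast_nonneg using 4 <;> push_cast <;> ring

theorem wirsingOp_a_le (x : ℝ) (hx : x ∈ Set.Icc (0:ℝ) 1) :
    wirsingOp (fun y => 1 / (y + 2)^2) x ≤ (1/2) * (1 / (x + 2)^2) := calc
  wirsingOp (fun y => 1 / (y + 2)^2) x ≤ wirsingMajorant x 0 := by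
    rw [wirsingOp_eq_tsum]
    refine tsum_le_of_le_sub_succ (wirsingTerm_nonneg (fun y => by positivity) hx.1)
      (fun k => ?_) (wirsingMajorant_nonneg x)
    exact (wirsingTerm_le_wirsingBound hx.1 k).trans
      (wirsingBound_le_wirsingMajorant_sub hx.1 k)
  _ = (1/2) * (1 / (x + 2)^2) := by simp [wirsingMajorant]; ring
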